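/- arXiv:2106.12428 — 2 statements merged into one kernel-verified Lean document; each statement's English description precedes it below -/
import Mathlib

section
/- Let f⁽¹⁾, f⁽²⁾ ∈ ℝ₊ᴺ with ∑ᵢ fᵢ⁽¹⁾ Δvᵢ = ∑ᵢ fᵢ⁽²⁾ Δvᵢ = ∑ᵢ Δvᵢ. If η(f⁽¹⁾) ≤ η(f⁽²⁾) then ∑ᵢ (fᵢ⁽¹⁾ − 1)² Δvᵢ ≤ 2 ‖f⁽¹⁾‖_∞ ∑ᵢ (fᵢ⁽²⁾ − 1)² Δvᵢ. -/
/-!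
With `klFun x = x log x + 1 - x`, mass conservation turns `η(f)` into `∑ᵢ klFun fᵢ Δvᵢ`. Pointwise,
`klFun x ≤ (x - 1)²` because `log x ≤ x - 1`, while `(x - 1)² ≤ 2 max(1, x) klFun x` by comparing
derivatives from `x = 1`. Since the mass condition forces `‖f⁽¹⁾‖_∞ ≥ 1`, chaining these bounds
through `η(f⁽¹⁾) ≤ η(f⁽²⁾)` gives the claim.
-/

open Real Set Finset InformationTheory

lemma klFun_le_sq_sub_one {x : ℝ} (hx : 0 ≤ x) : klFun x ≤ (x - 1) ^ 2 := by
  rcases hx.eq_or_lt with rfl | hx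
  · simp [klFun_zero]
  · nlinarith [mul_le_mul_of_nonneg_left (log_le_sub_one_of_pos hx) hx.le, klFun_apply x]

lemma sq_sub_one_le_two_mul_klFun {x : ℝ} (hx₀ : 0 ≤ x) (hx₁ : x ≤ 1) :
    (x - 1) ^ 2 ≤ 2 * klFun x := by
  let g : ℝ → ℝ := fun t => 2 * klFun t - (t - 1) ^ 2
  have hg : AntitoneOn g (Icc x 1) := by
    refine antitoneOn_of_hasDerivWithinAt_nonpos (f' := fun t => 2 * log t - 2 * (t - 1))
      (convex_Icc x 1) (by fun_prop [continuous_klFun]) (fun t ht => ?_) (fun t ht => ?_)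
    all_goals
      rw [interior_Icc] at ht
      have ht₀ : 0 < t := hx₀.trans_lt ht.1
    · have := ((hasDerivAt_klFun ht₀.ne').const_mul 2).fun_sub
        (((hasDerivAt_id t).sub_const 1).fun_pow 2)
      simpa using this.hasDerivWithinAt
    · linarith [log_le_sub_one_of_pos ht₀]
  have := hg (left_mem_Icc.2 hx₁) (right_mem_Icc.2 hx₁) hx₁
  simp only [g, klFun_one] at this
  linarith

lemma sq_sub_one_le_two_mul_mul_klFun {x : ℝ} (hx : 1 ≤ x) :
    (x - 1) ^ 2 ≤ 2 * x * klFun x := by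
  let g : ℝ → ℝ := fun t => 2 * t * klFun t - (t - 1) ^ 2
  have hg : MonotoneOn g (Icc 1 x) := by
    refine monotoneOn_of_hasDerivWithinAt_nonneg (f' := fun t => 4 * klFun t)
      (convex_Icc 1 x) (by fun_prop [continuous_klFun]) (fun t ht => ?_) (fun t ht => ?_)
    all_goals
      rw [interior_Icc] at ht
      have ht₀ : 0 < t := one_pos.trans ht.1
    · have := (((hasDerivAt_id' t).const_mul 2).fun_mul (hasDerivAt_klFun ht₀.ne')).fun_sub
        (((hasDerivAt_id' t).sub_const 1).fun_pow 2)
      refine this.hasDerivWithinAt.congr_deriv ?_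
      rw [klFun_apply]
      push_cast
      ring
    · linarith [klFun_nonneg ht₀.le]
  have := hg (left_mem_Icc.2 hx) (right_mem_Icc.2 hx) hx
  simp only [g, klFun_one] at this
  linarith

lemma sq_sub_one_le_two_mul_klFun_of_le {x M : ℝ} (hx : 0 ≤ x) (hM : 1 ≤ M) (hxM : x ≤ M) :
    (x - 1) ^ 2 ≤ 2 * M * klFun x := by
  have hkl := klFun_nonneg hx
  rcases le_total x 1 with hx₁ | hx₁
  · nlinarith [sq_sub_one_le_two_mul_klFun hx hx₁]
  · nlinarith [sq_sub_one_le_two_mul_mul_klFun hx₁]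

section WeightedSums

variable {ι : Type*} [Fintype ι] {w f : ι → ℝ}

lemma sum_klFun_mul_eq_sum_mul_log_mul (hmass : ∑ i, f i * w i = ∑ i, w i) :
    ∑ i, klFun (f i) * w i = ∑ i, f i * log (f i) * w i := by
  simp only [klFun_apply, sub_mul, add_mul, one_mul, sum_sub_distrib, sum_add_distrib, hmass]
  ring

lemma one_le_ciSup_of_sum_mul_eq [Nonempty ι] (hw : ∀ i, 0 < w i)
    (hmass : ∑ i, f i * w i = ∑ i, w i) : 1 ≤ ⨆ i, f i := by
  have hle : ∑ i, w i ≤ (⨆ i, f i) * ∑ i, w i := by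
    conv_lhs => rw [← hmass]
    rw [mul_sum]
    exact sum_le_sum fun i _ =>
      mul_le_mul_of_nonneg_right (le_ciSup (finite_range f).bddAbove i) (hw i).le
  have hpos : 0 < ∑ i, w i := sum_pos (fun i _ => hw i) univ_nonempty
  nlinarith

end WeightedSums

theorem entropy_order_two_norm_general
    (N : ℕ) (Δv f1 f2 : Fin N → ℝ)
    (hΔv : ∀ i, 0 < Δv i) (hf1 : ∀ i, 0 ≤ f1 i) (hf2 : ∀ i, 0 ≤ f2 i)
    (hmass1 : (∑ i, f1 i * Δv i) = ∑ i, Δv i)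
    (hmass2 : (∑ i, f2 i * Δv i) = ∑ i, Δv i)
    (hη : (∑ i, f1 i * Real.log (f1 i) * Δv i) ≤ ∑ i, f2 i * Real.log (f2 i) * Δv i) :
    (∑ i, (f1 i - 1) ^ 2 * Δv i) ≤
      2 * (⨆ i, f1 i) * ∑ i, (f2 i - 1) ^ 2 * Δv i := by
  cases isEmpty_or_nonempty (Fin N)
  · simp
  set M := ⨆ i, f1 i
  have hM : 1 ≤ M := one_le_ciSup_of_sum_mul_eq hΔv hmass1
  calc ∑ i, (f1 i - 1) ^ 2 * Δv i
      ≤ ∑ i, 2 * M * klFun (f1 i) * Δv i := by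
        gcongr with i
        · exact (hΔv i).le
        · exact sq_sub_one_le_two_mul_klFun_of_le (hf1 i) hM
            (le_ciSup (finite_range f1).bddAbove i)
    _ = 2 * M * ∑ i, f1 i * log (f1 i) * Δv i := by
        simp only [mul_assoc, ← mul_sum, sum_klFun_mul_eq_sum_mul_log_mul hmass1]
    _ ≤ 2 * M * ∑ i, klFun (f2 i) * Δv i := by
        rw [sum_klFun_mul_eq_sum_mul_log_mul hmass2]
        gcongr
    _ ≤ 2 * M * ∑ i, (f2 i - 1) ^ 2 * Δv i := by
        gcongr with i
        · exact (hΔv i).le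
        · exact klFun_le_sq_sub_one (hf2 i)

/-- If `η(f1) ≤ η(f2)` for two nonnegative vectors of equal mass (equal to the
total weight), then `‖f1 - 1‖₂² ≤ 2 ‖f1‖_∞ ‖f2 - 1‖₂²`. -/
theorem entropy_order_two_norm
    (N : ℕ) (hN : 0 < N) (Δv f1 f2 : Fin N → ℝ)
    (hΔv : ∀ i, 0 < Δv i) (hf1 : ∀ i, 0 ≤ f1 i) (hf2 : ∀ i, 0 ≤ f2 i)
    (hmass1 : (∑ i, f1 i * Δv i) = ∑ i, Δv i)
    (hmass2 : (∑ i, f2 i * Δv i) = ∑ i, Δv i)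
    (hη : (∑ i, f1 i * Real.log (f1 i) * Δv i) ≤ ∑ i, f2 i * Real.log (f2 i) * Δv i) :
    (∑ i, (f1 i - 1) ^ 2 * Δv i) ≤
      2 * (⨆ i, f1 i) * ∑ i, (f2 i - 1) ^ 2 * Δv i :=
  entropy_order_two_norm_general N Δv f1 f2 hΔv hf1 hf2 hmass1 hmass2 hη
end

section
/- Let f⁽¹⁾, f⁽²⁾ ∈ ℝ₊ᴺ with ‖f⁽¹⁾ − f⁽²⁾‖_∞ ≤ 1/3, ∑ᵢ fᵢ⁽¹⁾ Δvᵢ = ∑ᵢ Δvᵢ, and set β₁ = 3‖f⁽¹⁾ − f⁽²⁾‖_∞ and f⁽³⁾ = f⁽¹⁾ + β₁(1 − f⁽¹⁾). Then: (1) for every k with f_k⁽¹⁾ < 2/3 one has h(f_k⁽³⁾) ≤ h(f_k⁽²⁾); (2) for every k with f_k⁽¹⁾ ≥ 2/3 one has f_k⁽³⁾ ≥ 2/3; (3) ‖f⁽³⁾ − f⁽¹⁾‖_∞ ≤ 3‖f⁽¹⁾‖_∞ ‖f⁽¹⁾ − f⁽²⁾‖_∞. -/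
/-!
With `s = ‖f1 - f2‖_∞`, each `f3 k = f1 k + 3s (1 - f1 k)` is a convex combination of `f1 k`
and `1`, since `3s ≤ 1`. If `f1 k < 2/3` then `f2 k ≤ f1 k + s ≤ f3 k ≤ 1`, and `h` decreases on
`[0, 1]`. The mass condition forces some `f1 i ≥ 1`, so `|1 - f1 k| ≤ ‖f1‖_∞`.
-/

open Real Set Finset

/-- `t ↦ t log t - t` has derivative `log t ≤ 0` on `(0, 1)`. -/
lemma antitoneOn_mul_log_sub_self : AntitoneOn (fun t : ℝ => t * log t - t) (Icc 0 1) := by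
  have hderiv : ∀ t ∈ Ioo (0 : ℝ) 1, HasDerivAt (fun t : ℝ => t * log t - t) (log t) t := by
    intro t ht
    have h := (hasDerivAt_mul_log ht.1.ne').sub (hasDerivAt_id t)
    rwa [add_sub_cancel_right] at h
  apply antitoneOn_of_deriv_nonpos (convex_Icc 0 1)
  · exact (continuous_mul_log.sub continuous_id).continuousOn
  · rw [interior_Icc]
    exact fun t ht => (hderiv t ht).differentiableAt.differentiableWithinAt
  · rw [interior_Icc]
    intro t ht
    rw [(hderiv t ht).deriv]
    exact log_nonpos ht.1.le ht.2.le

lemma mul_log_sub_self_le_of_abs_sub_le {x y s : ℝ} (hy : 0 ≤ y) (hx : x < 2 / 3)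
    (hxy : |x - y| ≤ s) (hs : s ≤ 1 / 3) :
    (x + 3 * s * (1 - x)) * log (x + 3 * s * (1 - x)) - (x + 3 * s * (1 - x)) ≤
      y * log y - y := by
  have hs₀ : 0 ≤ s := (abs_nonneg _).trans hxy
  have hyx : y ≤ x + s := by linarith [(abs_sub_le_iff.mp hxy).2]
  -- `3 (1 - x) > 1` because `x < 2/3`
  have hyz : y ≤ x + 3 * s * (1 - x) := by nlinarith
  have hz : x + 3 * s * (1 - x) ≤ 1 := by nlinarith
  exact antitoneOn_mul_log_sub_self ⟨hy, hyz.trans hz⟩ ⟨hy.trans hyz, hz⟩ hyz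

lemma min_le_add_mul_one_sub {x β : ℝ} (hβ₀ : 0 ≤ β) (hβ₁ : β ≤ 1) :
    min x 1 ≤ x + β * (1 - x) := by
  rcases le_total x 1 with h | h
  · rw [min_eq_left h]; nlinarith
  · rw [min_eq_right h]; nlinarith

lemma abs_add_mul_one_sub_sub_self_le {x β M : ℝ} (hβ : 0 ≤ β) (hx : 0 ≤ x) (hxM : x ≤ M)
    (hM : 1 ≤ M) : |x + β * (1 - x) - x| ≤ β * M := by
  rw [add_sub_cancel_left, abs_mul, abs_of_nonneg hβ]
  exact mul_le_mul_of_nonneg_left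
    (abs_sub_le_of_nonneg_of_le zero_le_one hM hx hxM) hβ

lemma one_le_iSup_of_sum_mul_eq_sum {ι : Type*} [Fintype ι] [Nonempty ι] {w f : ι → ℝ}
    (hw : ∀ i, 0 < w i) (h : ∑ i, f i * w i = ∑ i, w i) : 1 ≤ ⨆ i, f i := by
  obtain ⟨i, -, hi⟩ := Finset.exists_le_of_sum_le univ_nonempty h.ge
  have hfi : 1 ≤ f i := by nlinarith [hw i]
  exact hfi.trans (le_ciSup (Finite.bddAbove_range f) i)

theorem inf_perturb_properties_general
    (N : ℕ) (Δv f1 f2 : Fin N → ℝ)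
    (hΔv : ∀ i, 0 < Δv i) (hf1 : ∀ i, 0 ≤ f1 i) (hf2 : ∀ i, 0 ≤ f2 i)
    (hdiff : (⨆ i, |f1 i - f2 i|) ≤ 1 / 3)
    (hmass : (∑ i, f1 i * Δv i) = ∑ i, Δv i) :
    (∀ k, f1 k < 2 / 3 →
        ((f1 k + 3 * (⨆ i, |f1 i - f2 i|) * (1 - f1 k)) *
            Real.log (f1 k + 3 * (⨆ i, |f1 i - f2 i|) * (1 - f1 k)) -
          (f1 k + 3 * (⨆ i, |f1 i - f2 i|) * (1 - f1 k))) ≤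
        (f2 k * Real.log (f2 k) - f2 k)) ∧
    (∀ k, 2 / 3 ≤ f1 k → 2 / 3 ≤ f1 k + 3 * (⨆ i, |f1 i - f2 i|) * (1 - f1 k)) ∧
    ((⨆ k, |(f1 k + 3 * (⨆ i, |f1 i - f2 i|) * (1 - f1 k)) - f1 k|) ≤
      3 * (⨆ i, f1 i) * (⨆ i, |f1 i - f2 i|)) := by
  set s := ⨆ i, |f1 i - f2 i|
  have hs₀ : 0 ≤ s := Real.iSup_nonneg fun i => abs_nonneg _
  have hle_s : ∀ k, |f1 k - f2 k| ≤ s := le_ciSup (Finite.bddAbove_range _)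
  refine ⟨fun k hk => mul_log_sub_self_le_of_abs_sub_le (hf2 k) hk (hle_s k) hdiff,
    fun k hk => (le_min hk (by norm_num)).trans
      (min_le_add_mul_one_sub (by positivity) (by linarith)), ?_⟩
  have hM₀ : 0 ≤ ⨆ i, f1 i := Real.iSup_nonneg hf1
  refine Real.iSup_le (fun k => ?_) (by positivity)
  have : Nonempty (Fin N) := ⟨k⟩
  have hM : 1 ≤ ⨆ i, f1 i := one_le_iSup_of_sum_mul_eq_sum hΔv hmass
  calc |f1 k + 3 * s * (1 - f1 k) - f1 k| ≤ 3 * s * ⨆ i, f1 i :=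
        abs_add_mul_one_sub_sub_self_le (by positivity) (hf1 k)
          (le_ciSup (Finite.bddAbove_range f1) k) hM
    _ = 3 * (⨆ i, f1 i) * s := by ring

/-- Lemma 3.5: properties of the regularized vector
`f3 = f1 + β₁ (1 - f1)` with `β₁ = 3 ‖f1 - f2‖_∞`. -/
theorem inf_perturb_properties
    (N : ℕ) (hN : 0 < N) (Δv f1 f2 : Fin N → ℝ)
    (hΔv : ∀ i, 0 < Δv i) (hf1 : ∀ i, 0 ≤ f1 i) (hf2 : ∀ i, 0 ≤ f2 i)
    (hdiff : (⨆ i, |f1 i - f2 i|) ≤ 1 / 3)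
    (hmass : (∑ i, f1 i * Δv i) = ∑ i, Δv i) :
    (∀ k, f1 k < 2 / 3 →
        ((f1 k + 3 * (⨆ i, |f1 i - f2 i|) * (1 - f1 k)) *
            Real.log (f1 k + 3 * (⨆ i, |f1 i - f2 i|) * (1 - f1 k)) -
          (f1 k + 3 * (⨆ i, |f1 i - f2 i|) * (1 - f1 k))) ≤
        (f2 k * Real.log (f2 k) - f2 k)) ∧
    (∀ k, 2 / 3 ≤ f1 k → 2 / 3 ≤ f1 k + 3 * (⨆ i, |f1 i - f2 i|) * (1 - f1 k)) ∧
    ((⨆ k, |(f1 k + 3 * (⨆ i, |f1 i - f2 i|) * (1 - f1 k)) - f1 k|) ≤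
      3 * (⨆ i, f1 i) * (⨆ i, |f1 i - f2 i|)) :=
  inf_perturb_properties_general N Δv f1 f2 hΔv hf1 hf2 hdiff hmass
end
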